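/- Let p be prime, k ≥ 0, ℓ ≥ 1 integers with k < ℓ, and let 𝟏 denote the constant function 1 on ℤ/p^ℓℤ. Then S_𝟏(a, b; p^k; p^ℓ) = p^k · Σ_{i = max(0, k − a_p)}^{min(b_p, k)} S(a/p^{k−i}, b/p^i; p^{ℓ−k}) if k ≤ a_p + b_p, and S_𝟏(a, b; p^k; p^ℓ) = 0 otherwise, where a_p = ord_p(a), b_p = ord_p(b), and S(x, y; c) = Σ_{t t' ≡ 1 mod c} e((xt + yt')/c) is the classical Kloosterman sum. -/

import Mathlib

open Finset

instance neZeroOfFactPrime (p : ℕ) [hp : Fact p.Prime] : NeZero p := ⟨hp.out.ne_zero⟩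

instance neZeroPowNat {p : ℕ} [NeZero p] (n : ℕ) : NeZero (p ^ n) :=
  ⟨pow_ne_zero n (NeZero.ne p)⟩

/-- The generalized Kloosterman sum with trivial character:
`S_𝟏(a,b;n;c) = ∑_{x x' = n in ℤ/cℤ} e((a x + b x')/c)`. -/
noncomputable def klSumOne (c : ℕ) [NeZero c] (a b n : ℤ) : ℂ :=
  ∑ x : ZMod c, ∑ x' : ZMod c,
    if x * x' = (n : ZMod c) then
      Complex.exp (2 * Real.pi * Complex.I * ((a : ℂ) * x.val + (b : ℂ) * x'.val) / c)
    else 0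

/-- The classical Kloosterman sum `S(x,y;c) = ∑_{t t' ≡ 1 mod c} e((x t + y t')/c)`. -/
noncomputable def kloos (c : ℕ) [NeZero c] (x y : ℤ) : ℂ :=
  ∑ t : (ZMod c)ˣ,
    Complex.exp (2 * Real.pi * Complex.I *
      ((x : ℂ) * ((t : ZMod c).val : ℂ) + (y : ℂ) * (((t⁻¹ : (ZMod c)ˣ) : ZMod c).val : ℂ))
      / c)

/-! Splitting the sum according to whether `x` is a unit gives a recursion in `k`. For a unit `x`
the partner is `x' = p^k x⁻¹`, and `e(b p^k x⁻¹ / p^ℓ)` only depends on `x mod p^(ℓ-k)`, so summing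
`e(a x / p^ℓ)` over the fibres of `ZMod (p^ℓ) → ZMod (p^(ℓ-k))` gives
`[p^k ∣ a] p^k S(a/p^k, b; p^(ℓ-k))`. A non-unit is `x = p y` with `y mod p^(ℓ-1)`, and the
constraint `p y x' = p^k` only sees `x' mod p^(ℓ-1)`; the same fibre summation over `x'` gives
`[p ∣ b] p S_𝟏(a, b/p; p^(k-1); p^(ℓ-1))`. Unwinding the recursion, the `i`-th step contributes
exactly when `p^i ∣ b` and `p^(k-i) ∣ a`. -/

namespace ZMod

section CharacterSums

variable {n N M : ℕ} [NeZero n]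

lemma exp_eq_stdAddChar (a b : ℤ) (x y : ZMod n) :
    Complex.exp (2 * Real.pi * Complex.I * ((a : ℂ) * x.val + (b : ℂ) * y.val) / n)
      = stdAddChar ((a : ZMod n) * x + (b : ZMod n) * y) := by
  have hcast : (a : ZMod n) * x + (b : ZMod n) * y = ((a * x.val + b * y.val : ℤ) : ZMod n) := by
    push_cast
    rw [natCast_zmod_val, natCast_zmod_val]
  rw [hcast, stdAddChar_coe]
  push_cast
  rfl

lemma natCast_mul_eq_natCast_mul_iff (hn : N * M = n) (x y : ZMod n) :
    (M : ZMod n) * x = M * y ↔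
      castHom (Dvd.intro M hn) (ZMod N) x = castHom (Dvd.intro M hn) (ZMod N) y := by
  rw [← sub_eq_zero, ← mul_sub, ← sub_eq_zero (a := castHom _ _ x), ← map_sub,
    ← natCast_zmod_val (x - y), ← Nat.cast_mul, map_natCast, natCast_eq_zero_iff,
    natCast_eq_zero_iff]
  have hM : 0 < M := Nat.pos_of_ne_zero (right_ne_zero_of_mul (hn ▸ NeZero.ne n))
  subst hn
  generalize (x - y).val = v
  rw [mul_comm N, Nat.mul_dvd_mul_iff_left hM]

variable [NeZero N]

lemma sum_comp_castHom {β : Type*} [AddCommMonoid β] (hn : N * M = n) (h : ZMod N → β) :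
    ∑ x : ZMod n, h (castHom (Dvd.intro M hn) (ZMod N) x) = M • ∑ y, h y := by
  set π := castHom (Dvd.intro M hn) (ZMod N)
  have hfiber : ∀ y, #{x | π x = y} = #{x | π x = 0} := fun y =>
    AddMonoidHom.card_fiber_eq_of_mem_range π.toAddMonoidHom
      (castHom_surjective (Dvd.intro M hn) y) (castHom_surjective (Dvd.intro M hn) 0)
  have hcard : #{x | π x = 0} = M := by
    have hsum := card_eq_sum_card_fiberwise (s := univ) (t := univ) (f := π)
      (fun _ _ => mem_univ _)
    simp only [card_univ, ZMod.card, hfiber, sum_const, smul_eq_mul] at hsum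
    exact Nat.eq_of_mul_eq_mul_left (Nat.pos_of_neZero N) (hsum.symm.trans hn.symm)
  rw [← sum_fiberwise univ π, smul_sum]
  refine sum_congr rfl fun y _ => ?_
  rw [sum_congr rfl fun x hx => congrArg h (mem_filter.mp hx).2, sum_const, hfiber, hcard]

lemma stdAddChar_natCast_mul (hn : N * M = n) (x : ZMod n) :
    stdAddChar ((M : ZMod n) * x) = stdAddChar (castHom (Dvd.intro M hn) (ZMod N) x) := by
  have hexp : ∀ {c : ℕ} [NeZero c] (j : ℕ),
      stdAddChar (j : ZMod c) = Complex.exp (2 * Real.pi * Complex.I * j / c) := fun j => by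
    simpa using stdAddChar_coe (j : ℤ)
  rw [← natCast_zmod_val x, map_natCast, ← Nat.cast_mul, hexp, hexp]
  have hN : (N : ℂ) ≠ 0 := Nat.cast_ne_zero.mpr (NeZero.ne N)
  have hM : (M : ℂ) ≠ 0 := Nat.cast_ne_zero.mpr (right_ne_zero_of_mul (hn ▸ NeZero.ne n))
  subst hn
  push_cast
  field_simp

lemma sum_castHom_mul_stdAddChar (hn : N * M = n) (g : ZMod N → ℂ) (a : ℤ) :
    ∑ x : ZMod n, g (castHom (Dvd.intro M hn) (ZMod N) x) * stdAddChar ((a : ZMod n) * x)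
      = if (M : ℤ) ∣ a then M * ∑ y, g y * stdAddChar (((a / M : ℤ) : ZMod N) * y) else 0 := by
  set π := castHom (Dvd.intro M hn) (ZMod N)
  have hM : M ≠ 0 := right_ne_zero_of_mul (hn ▸ NeZero.ne n)
  split_ifs with hMa
  · obtain ⟨c, rfl⟩ := hMa
    have hterm : ∀ x : ZMod n, stdAddChar (((M * c : ℤ) : ZMod n) * x)
        = stdAddChar ((c : ZMod N) * π x) := fun x => by
      rw [Int.cast_mul, Int.cast_natCast, mul_assoc, stdAddChar_natCast_mul hn, map_mul,
        map_intCast]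
    simp only [hterm, Int.mul_ediv_cancel_left c (Int.natCast_ne_zero.mpr hM)]
    rw [sum_comp_castHom hn (fun y => g y * stdAddChar ((c : ZMod N) * y)), nsmul_eq_mul]
  · -- Translating by `N` fixes `π x` and multiplies every term by `e(a/M) ≠ 1`.
    set S := ∑ x : ZMod n, g (π x) * stdAddChar ((a : ZMod n) * x)
    have hshift : S = stdAddChar ((a : ZMod n) * (N : ZMod n)) * S := calc
      S = ∑ x : ZMod n,
          g (π (x + (N : ZMod n))) * stdAddChar ((a : ZMod n) * (x + (N : ZMod n))) :=
        (Fintype.sum_equiv (Equiv.addRight (N : ZMod n)) _ _ fun _ => rfl).symm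
      _ = stdAddChar ((a : ZMod n) * (N : ZMod n)) * S := by
        rw [mul_sum]
        refine sum_congr rfl fun x _ => ?_
        rw [map_add, map_natCast, natCast_self, add_zero, mul_add, AddChar.map_add_eq_mul]
        ring
    have hne : stdAddChar ((a : ZMod n) * (N : ZMod n)) ≠ 1 := by
      rw [← AddChar.map_zero_eq_one (stdAddChar (N := n)), Ne, injective_stdAddChar.eq_iff,
        ← Int.cast_natCast, ← Int.cast_mul, intCast_zmod_eq_zero_iff_dvd, ← hn, Nat.cast_mul,
        mul_comm (N : ℤ), mul_dvd_mul_iff_right (Int.natCast_ne_zero.mpr (NeZero.ne N))]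
      exact hMa
    have hS : (1 - stdAddChar ((a : ZMod n) * (N : ZMod n))) * S = 0 := by
      rw [sub_mul, one_mul, ← hshift, sub_self]
    exact (mul_eq_zero.mp hS).resolve_left (sub_ne_zero.mpr hne.symm)

end CharacterSums

section PrimePower

variable (p : ℕ) [hp : Fact p.Prime]

lemma isUnit_natCast_prime_pow_iff {m : ℕ} (hm : m ≠ 0) (j : ℕ) :
    IsUnit (j : ZMod (p ^ m)) ↔ ¬ p ∣ j := by
  rw [isUnit_iff_coprime, Nat.coprime_pow_right_iff (Nat.pos_of_ne_zero hm),
    Nat.coprime_comm, hp.out.coprime_iff_not_dvd]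

lemma isUnit_castHom_prime_pow_iff {m j : ℕ} (hj : j ≠ 0) (h : p ^ j ∣ p ^ m)
    (x : ZMod (p ^ m)) :
    IsUnit (castHom h (ZMod (p ^ j)) x) ↔ IsUnit x := by
  have hm : m ≠ 0 := by
    rintro rfl
    exact hj ((Nat.pow_dvd_pow_iff_le_right hp.out.one_lt).mp h |> Nat.eq_zero_of_le_zero)
  rw [← natCast_zmod_val x, map_natCast, isUnit_natCast_prime_pow_iff p hj,
    isUnit_natCast_prime_pow_iff p hm]

lemma sum_ite_isUnit_zero_prime_pow_succ {β : Type*} [AddCommMonoid β] (ℓ : ℕ)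
    (f : ZMod (p ^ (ℓ + 1)) → β) :
    ∑ x, (if IsUnit x then 0 else f x) = ∑ z : ZMod (p ^ ℓ), f (p * z.val) := by
  have hn : p ^ ℓ * p = p ^ (ℓ + 1) := (pow_succ p ℓ).symm
  set π := castHom (Dvd.intro _ hn) (ZMod (p ^ ℓ))
  have hπ : ∀ z : ZMod (p ^ ℓ), π (z.val : ZMod (p ^ (ℓ + 1))) = z := fun z => by
    rw [map_natCast, natCast_zmod_val]
  have hunit : ∀ j : ℕ, IsUnit (j : ZMod (p ^ (ℓ + 1))) ↔ ¬ p ∣ j :=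
    isUnit_natCast_prime_pow_iff p (Nat.succ_ne_zero ℓ)
  rw [sum_congr rfl fun x _ => (ite_not (IsUnit x) (f x) 0).symm, ← sum_filter]
  symm
  refine sum_nbij (fun z => (p : ZMod (p ^ (ℓ + 1))) * z.val) (fun z _ => ?_)
    (fun z _ z' _ h => ?_) (fun x hx => ?_) (fun _ _ => rfl)
  · rw [mem_filter, ← Nat.cast_mul, hunit, not_not]
    exact ⟨mem_univ _, dvd_mul_right p _⟩
  · rw [← hπ z, ← hπ z']
    exact (natCast_mul_eq_natCast_mul_iff hn _ _).mp h
  · rw [mem_coe, mem_filter, ← natCast_zmod_val x, hunit, not_not] at hx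
    obtain ⟨q, hq⟩ := hx.2
    refine ⟨(q : ZMod (p ^ ℓ)), mem_coe.mpr (mem_univ _), ?_⟩
    rw [← natCast_zmod_val x, hq, Nat.cast_mul]
    exact (natCast_mul_eq_natCast_mul_iff hn _ _).mpr (by rw [hπ, map_natCast])

end PrimePower

end ZMod

open ZMod

lemma klSumOne_eq_sum_stdAddChar (c : ℕ) [NeZero c] (a b n : ℤ) :
    klSumOne c a b n = ∑ x : ZMod c, ∑ y : ZMod c,
      if x * y = n then stdAddChar ((a : ZMod c) * x + (b : ZMod c) * y) else 0 := by
  simp only [klSumOne, exp_eq_stdAddChar]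

lemma kloos_eq_sum_isUnit (c : ℕ) [NeZero c] (x y : ℤ) :
    kloos c x y = ∑ t : ZMod c,
      if IsUnit t then stdAddChar ((x : ZMod c) * t + (y : ZMod c) * t⁻¹) else 0 := by
  rw [← sum_filter, kloos]
  refine sum_nbij (fun u => (u : ZMod c)) (fun u _ => by simp)
    (Units.val_injective.injOn) (fun t ht => ?_) (fun u _ => ?_)
  · exact ⟨(mem_filter.mp ht).2.unit, mem_coe.mpr (mem_univ _), rfl⟩
  · rw [exp_eq_stdAddChar, inv_coe_unit]

section KloostermanPrimePower

variable (p : ℕ) [Fact p.Prime]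

lemma sum_ite_isUnit_stdAddChar_eq_kloos {k ℓ : ℕ} (hkℓ : k < ℓ) (a b : ℤ) :
    ∑ x : ZMod (p ^ ℓ), (if IsUnit x then
        stdAddChar ((a : ZMod (p ^ ℓ)) * x + (b : ZMod (p ^ ℓ)) * ((p : ZMod (p ^ ℓ)) ^ k * x⁻¹))
      else 0)
      = if (p : ℤ) ^ k ∣ a then (p : ℂ) ^ k * kloos (p ^ (ℓ - k)) (a / (p : ℤ) ^ k) b else 0 := by
  have hn : p ^ (ℓ - k) * p ^ k = p ^ ℓ := by rw [← pow_add, Nat.sub_add_cancel hkℓ.le]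
  set π := castHom (Dvd.intro _ hn) (ZMod (p ^ (ℓ - k)))
  have hunit : ∀ x, IsUnit (π x) ↔ IsUnit x := isUnit_castHom_prime_pow_iff p (by omega) _
  have hsummand : ∀ x : ZMod (p ^ ℓ), (if IsUnit x then
        stdAddChar ((a : ZMod (p ^ ℓ)) * x + (b : ZMod (p ^ ℓ)) * ((p : ZMod (p ^ ℓ)) ^ k * x⁻¹))
      else 0)
      = (if IsUnit (π x) then stdAddChar ((b : ZMod (p ^ (ℓ - k))) * (π x)⁻¹) else 0)
        * stdAddChar ((a : ZMod (p ^ ℓ)) * x) := fun x => by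
    by_cases hx : IsUnit x
    · have hinv : (π x)⁻¹ = π x⁻¹ := ZMod.inv_eq_of_mul_eq_one _ _ _ (by
        rw [← map_mul, mul_inv_of_unit x hx, map_one])
      rw [if_pos hx, if_pos ((hunit x).mpr hx), AddChar.map_add_eq_mul, mul_comm,
        mul_left_comm, ← Nat.cast_pow, stdAddChar_natCast_mul hn, map_mul, map_intCast, hinv]
    · rw [if_neg hx, if_neg (mt (hunit x).mp hx), zero_mul]
  rw [sum_congr rfl fun x _ => hsummand x]
  refine (sum_castHom_mul_stdAddChar hn
    (fun w => if IsUnit w then stdAddChar ((b : ZMod (p ^ (ℓ - k))) * w⁻¹) else 0) a).trans ?_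
  simp only [kloos_eq_sum_isUnit, Nat.cast_pow]
  refine if_congr Iff.rfl (congrArg _ (sum_congr rfl fun y _ => ?_)) rfl
  split_ifs
  · rw [AddChar.map_add_eq_mul, mul_comm]
  · rw [zero_mul]

lemma klSumOne_prime_pow_eq_kloos_add {k ℓ : ℕ} (hkℓ : k < ℓ) (a b : ℤ) :
    klSumOne (p ^ ℓ) a b ((p : ℤ) ^ k)
      = (if (p : ℤ) ^ k ∣ a then (p : ℂ) ^ k * kloos (p ^ (ℓ - k)) (a / (p : ℤ) ^ k) b else 0)
        + ∑ x : ZMod (p ^ ℓ), if IsUnit x then 0 else ∑ y : ZMod (p ^ ℓ),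
            if x * y = (p : ZMod (p ^ ℓ)) ^ k then
              stdAddChar ((a : ZMod (p ^ ℓ)) * x + (b : ZMod (p ^ ℓ)) * y) else 0 := by
  rw [klSumOne_eq_sum_stdAddChar, ← sum_ite_isUnit_stdAddChar_eq_kloos p hkℓ,
    ← sum_add_distrib]
  refine sum_congr rfl fun x _ => ?_
  simp only [Int.cast_pow, Int.cast_natCast]
  by_cases hx : IsUnit x
  · have hsolve : ∀ y, x * y = (p : ZMod (p ^ ℓ)) ^ k ↔ (p : ZMod (p ^ ℓ)) ^ k * x⁻¹ = y :=
      fun y => ⟨fun h => by rw [← h, mul_comm x, mul_assoc, mul_inv_of_unit x hx, mul_one],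
        fun h => by rw [← h, mul_left_comm, mul_inv_of_unit x hx, mul_one]⟩
    simp only [hsolve, if_pos hx, sum_ite_eq, mem_univ, if_true, add_zero]
  · rw [if_neg hx, if_neg hx, zero_add]

lemma sum_ite_isUnit_zero_eq_klSumOne {k ℓ : ℕ} (a b : ℤ) :
    ∑ x : ZMod (p ^ (ℓ + 1)), (if IsUnit x then 0 else ∑ y : ZMod (p ^ (ℓ + 1)),
        if x * y = (p : ZMod (p ^ (ℓ + 1))) ^ (k + 1) then
          stdAddChar ((a : ZMod (p ^ (ℓ + 1))) * x + (b : ZMod (p ^ (ℓ + 1))) * y) else 0)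
      = if (p : ℤ) ∣ b then (p : ℂ) * klSumOne (p ^ ℓ) a (b / p) ((p : ℤ) ^ k) else 0 := by
  have hn : p ^ ℓ * p = p ^ (ℓ + 1) := (pow_succ p ℓ).symm
  set π := castHom (Dvd.intro _ hn) (ZMod (p ^ ℓ))
  have hπ : ∀ z : ZMod (p ^ ℓ), π (z.val : ZMod (p ^ (ℓ + 1))) = z := fun z => by
    rw [map_natCast, natCast_zmod_val]
  have hfibre : ∀ z : ZMod (p ^ ℓ),
      ∑ y : ZMod (p ^ (ℓ + 1)),
        (if (p : ZMod (p ^ (ℓ + 1))) * z.val * y = (p : ZMod (p ^ (ℓ + 1))) ^ (k + 1) then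
          stdAddChar ((a : ZMod (p ^ (ℓ + 1))) * ((p : ZMod (p ^ (ℓ + 1))) * (z.val : ZMod _))
            + (b : ZMod (p ^ (ℓ + 1))) * y) else 0)
      = if (p : ℤ) ∣ b then (p : ℂ) * ∑ w : ZMod (p ^ ℓ), if z * w = (p : ZMod (p ^ ℓ)) ^ k then
          stdAddChar ((a : ZMod (p ^ ℓ)) * z + ((b / p : ℤ) : ZMod (p ^ ℓ)) * w) else 0
        else 0 := fun z => calc
    _ = stdAddChar ((a : ZMod (p ^ ℓ)) * z) * ∑ y : ZMod (p ^ (ℓ + 1)),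
          (if z * π y = (p : ZMod (p ^ ℓ)) ^ k then 1 else 0)
            * stdAddChar ((b : ZMod (p ^ (ℓ + 1))) * y) := by
        have hcond : ∀ y,
            (p : ZMod (p ^ (ℓ + 1))) * z.val * y = (p : ZMod (p ^ (ℓ + 1))) ^ (k + 1)
              ↔ z * π y = (p : ZMod (p ^ ℓ)) ^ k := fun y => by
          rw [pow_succ' (p : ZMod (p ^ (ℓ + 1))) k, mul_assoc, natCast_mul_eq_natCast_mul_iff hn,
            map_mul, map_pow, hπ, map_natCast]
        have hchar : stdAddChar
            ((a : ZMod (p ^ (ℓ + 1))) * ((p : ZMod (p ^ (ℓ + 1))) * (z.val : ZMod _)))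
            = stdAddChar ((a : ZMod (p ^ ℓ)) * z) := by
          rw [mul_left_comm, stdAddChar_natCast_mul hn, map_mul, map_intCast, hπ]
        rw [mul_sum]
        refine sum_congr rfl fun y _ => ?_
        simp only [hcond, AddChar.map_add_eq_mul, hchar]
        split_ifs <;> simp
    _ = _ := by
        rw [sum_castHom_mul_stdAddChar hn
          (fun w => if z * w = (p : ZMod (p ^ ℓ)) ^ k then 1 else 0)]
        split_ifs
        · rw [mul_left_comm, mul_sum]
          refine congrArg _ (sum_congr rfl fun w _ => ?_)
          split_ifs <;> simp [AddChar.map_add_eq_mul]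
        · rw [mul_zero]
  rw [sum_ite_isUnit_zero_prime_pow_succ, sum_congr rfl fun z _ => hfibre z]
  split_ifs
  · rw [klSumOne_eq_sum_stdAddChar, mul_sum]
    simp only [Int.cast_pow, Int.cast_natCast]
  · rw [sum_const_zero]

lemma klSumOne_prime_pow_eq_sum_range {k ℓ : ℕ} (hkℓ : k < ℓ) (a b : ℤ) :
    klSumOne (p ^ ℓ) a b ((p : ℤ) ^ k) = ∑ i ∈ range (k + 1),
      if (p : ℤ) ^ i ∣ b ∧ (p : ℤ) ^ (k - i) ∣ a then
        (p : ℂ) ^ k * kloos (p ^ (ℓ - k)) (a / (p : ℤ) ^ (k - i)) (b / (p : ℤ) ^ i)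
      else 0 := by
  induction k generalizing ℓ b with
  | zero =>
    have hnonunit : ∀ x : ZMod (p ^ ℓ), ¬ IsUnit x → ∀ y, x * y ≠ (p : ZMod (p ^ ℓ)) ^ 0 :=
      fun x hx y hxy => hx (isUnit_iff_exists_inv.mpr ⟨y, by rwa [pow_zero] at hxy⟩)
    rw [klSumOne_prime_pow_eq_kloos_add p hkℓ, sum_eq_zero fun x _ => ?_]
    · simp
    · split_ifs with hx
      · rfl
      · exact sum_eq_zero fun y _ => if_neg (hnonunit x hx y)
  | succ k ih =>
    obtain ⟨ℓ, rfl⟩ : ∃ ℓ', ℓ = ℓ' + 1 := ⟨ℓ - 1, by omega⟩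
    have hp : (0 : ℤ) < p := Int.natCast_pos.mpr (Fact.out : p.Prime).pos
    rw [klSumOne_prime_pow_eq_kloos_add p hkℓ, sum_ite_isUnit_zero_eq_klSumOne,
      ih (by omega) (b / p), sum_range_succ' _ (k + 1), add_comm]
    congr 1
    · split_ifs with hpb
      · obtain ⟨c, rfl⟩ := hpb
        rw [Int.mul_ediv_cancel_left c hp.ne', mul_sum]
        refine sum_congr rfl fun i _ => ?_
        simp only [pow_succ' (p : ℤ) i, mul_dvd_mul_iff_left hp.ne',
          Int.mul_ediv_mul_of_pos _ _ hp, Nat.add_sub_add_right]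
        split_ifs
        · ring
        · rw [mul_zero]
      · refine (sum_eq_zero fun i _ => if_neg fun h => hpb ?_).symm
        exact (dvd_pow_self (p : ℤ) i.succ_ne_zero).trans h.1
    · simp

end KloostermanPrimePower

theorem klSumOne_prime_power_eval_general (p : ℕ) [Fact p.Prime] (k ℓ : ℕ)
    (hkℓ : k < ℓ) (a b : ℤ) (ha : a ≠ 0) (hb : b ≠ 0) :
    (k ≤ padicValInt p a + padicValInt p b →
      klSumOne (p ^ ℓ) a b ((p : ℤ) ^ k)
        = (p : ℂ) ^ k * ∑ i ∈ Finset.Icc (k - padicValInt p a) (min (padicValInt p b) k),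
            kloos (p ^ (ℓ - k)) (a / (p : ℤ) ^ (k - i)) (b / (p : ℤ) ^ i)) ∧
    (¬ k ≤ padicValInt p a + padicValInt p b →
      klSumOne (p ^ ℓ) a b ((p : ℤ) ^ k) = 0) := by
  have hrange : {i ∈ range (k + 1) | (p : ℤ) ^ i ∣ b ∧ (p : ℤ) ^ (k - i) ∣ a}
      = Icc (k - padicValInt p a) (min (padicValInt p b) k) := by
    ext i
    simp only [mem_filter, mem_range, mem_Icc, padicValInt_dvd_iff, ha, hb, false_or]
    omega
  have heval : klSumOne (p ^ ℓ) a b ((p : ℤ) ^ k)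
      = (p : ℂ) ^ k * ∑ i ∈ Icc (k - padicValInt p a) (min (padicValInt p b) k),
          kloos (p ^ (ℓ - k)) (a / (p : ℤ) ^ (k - i)) (b / (p : ℤ) ^ i) := by
    rw [klSumOne_prime_pow_eq_sum_range p hkℓ, ← sum_filter, hrange, mul_sum]
  refine ⟨fun _ => heval, fun h => ?_⟩
  rw [heval, Icc_eq_empty (by omega), sum_empty, mul_zero]

/-- Evaluation of `S_𝟏(a,b;p^k;p^ℓ)` for `k < ℓ` in terms of classical Kloosterman sums:
it equals `p^k ∑_{i=max(0,k−a_p)}^{min(b_p,k)} S(a/p^{k−i}, b/p^i; p^{ℓ−k})` when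
`k ≤ a_p + b_p`, and vanishes otherwise. -/
theorem klSumOne_prime_power_eval (p : ℕ) [Fact p.Prime] (k ℓ : ℕ)
    (hℓ : 1 ≤ ℓ) (hkℓ : k < ℓ) (a b : ℤ) (ha : a ≠ 0) (hb : b ≠ 0) :
    (k ≤ padicValInt p a + padicValInt p b →
      klSumOne (p ^ ℓ) a b ((p : ℤ) ^ k)
        = (p : ℂ) ^ k * ∑ i ∈ Finset.Icc (k - padicValInt p a) (min (padicValInt p b) k),
            kloos (p ^ (ℓ - k)) (a / (p : ℤ) ^ (k - i)) (b / (p : ℤ) ^ i)) ∧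
    (¬ k ≤ padicValInt p a + padicValInt p b →
      klSumOne (p ^ ℓ) a b ((p : ℤ) ^ k) = 0) :=
  klSumOne_prime_power_eval_general p k ℓ hkℓ a b ha hb
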